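/- arXiv:2109.04671 — 3 statements merged into one kernel-verified Lean document; each statement's English description precedes it below -/
import Mathlib

section
/- Let K ∈ ℝ^{m×m} be symmetric with K 1_m = 0_m, and suppose the submatrix K_{−k,−k} is positive definite for some k ∈ {1,…,m}. Then: (i) K_{−j,−j} is positive definite for every j ∈ {1,…,m}; (ii) K is positive semi-definite; and (iii) for a ∈ ℝ^m, a^⊤ K a = 0 if and only if all coordinates of a are equal, i.e., a is a scalar multiple of 1_m. -/
open Matrix

/-!
Since `K` kills constants and is symmetric, its quadratic form is unchanged by subtracting a
constant vector from its argument. Subtracting `v k` makes the `k`-th coordinate vanish, so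
`vᵀ K v` equals the quadratic form of the positive definite `K_{-k,-k}` at the remaining
coordinates. Hence `K` is positive semidefinite with kernel of the form exactly the constants,
and for any `j`, a vector supported off `j` is constant only if it is zero, which gives
positive definiteness of `K_{-j,-j}`.
-/

section ConstantKernel

variable {ι R : Type*} [Fintype ι] [CommRing R] {K : Matrix ι ι R}

theorem Matrix.mulVec_const_eq_zero (h1 : K *ᵥ (fun _ => 1) = 0) (c : R) :
    K *ᵥ (fun _ => c) = 0 := by
  have : (fun _ : ι => c) = c • fun _ => 1 := by ext; simp
  rw [this, mulVec_smul, h1, smul_zero]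

theorem Matrix.dotProduct_mulVec_sub_const (hK : K.IsSymm) (h1 : K *ᵥ (fun _ => 1) = 0)
    (v : ι → R) (c : R) :
    (v - fun _ => c) ⬝ᵥ K *ᵥ (v - fun _ => c) = v ⬝ᵥ K *ᵥ v := by
  have hvec : (fun _ : ι => c) ᵥ* K = 0 := by
    rw [← mulVec_transpose, hK.eq, mulVec_const_eq_zero h1]
  rw [mulVec_sub, mulVec_const_eq_zero h1, sub_zero, sub_dotProduct,
    dotProduct_mulVec (fun _ => c) K v, hvec, zero_dotProduct, sub_zero]

end ConstantKernel

theorem Matrix.dotProduct_mulVec_insertNth_zero {R : Type*} [NonUnitalNonAssocSemiring R] {n : ℕ}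
    (K : Matrix (Fin (n + 1)) (Fin (n + 1)) R) (j : Fin (n + 1)) (x : Fin n → R) :
    Fin.insertNth j 0 x ⬝ᵥ K *ᵥ Fin.insertNth j 0 x
      = x ⬝ᵥ K.submatrix j.succAbove j.succAbove *ᵥ x := by
  simp only [dotProduct, mulVec, submatrix_apply, Fin.sum_univ_succAbove _ j,
    Fin.insertNth_apply_same, Fin.insertNth_apply_succAbove, zero_mul, mul_zero, zero_add]

section ZeroRowSums

variable {R : Type*} [CommRing R] {n : ℕ} {K : Matrix (Fin (n + 1)) (Fin (n + 1)) R}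

theorem Matrix.dotProduct_mulVec_eq_submatrix_removeNth (hK : K.IsSymm)
    (h1 : K *ᵥ (fun _ => 1) = 0) (k : Fin (n + 1)) (v : Fin (n + 1) → R) :
    v ⬝ᵥ K *ᵥ v = Fin.removeNth k (v - fun _ => v k)
      ⬝ᵥ K.submatrix k.succAbove k.succAbove *ᵥ Fin.removeNth k (v - fun _ => v k) := by
  have hk : (v - fun _ => v k : Fin (n + 1) → R) k = 0 := sub_self (v k)
  rw [← dotProduct_mulVec_insertNth_zero, ← hk, Fin.insertNth_self_removeNth,
    dotProduct_mulVec_sub_const hK h1]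

variable [PartialOrder R] [StarRing R] [TrivialStar R]

theorem Matrix.posSemidef_of_posDef_submatrix (hK : K.IsSymm) (h1 : K *ᵥ (fun _ => 1) = 0)
    {k : Fin (n + 1)} (hk : (K.submatrix k.succAbove k.succAbove).PosDef) : K.PosSemidef :=
  .of_dotProduct_mulVec_nonneg (isHermitian_iff_isSymm.mpr hK) fun v => by
    rw [star_trivial, dotProduct_mulVec_eq_submatrix_removeNth hK h1 k]
    simpa only [star_trivial]
      using hk.posSemidef.dotProduct_mulVec_nonneg (Fin.removeNth k (v - fun _ => v k))

theorem Matrix.dotProduct_mulVec_self_eq_zero_iff_of_posDef_submatrix (hK : K.IsSymm)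
    (h1 : K *ᵥ (fun _ => 1) = 0) {k : Fin (n + 1)}
    (hk : (K.submatrix k.succAbove k.succAbove).PosDef) (v : Fin (n + 1) → R) :
    v ⬝ᵥ K *ᵥ v = 0 ↔ ∀ i, v i = v k := by
  rw [dotProduct_mulVec_eq_submatrix_removeNth hK h1 k]
  constructor
  · intro h0 i
    have hx : Fin.removeNth k (v - fun _ => v k) = 0 := by
      by_contra hne
      simpa [star_trivial, h0] using hk.dotProduct_mulVec_pos hne
    have hw : (v - fun _ => v k) = 0 := by
      rw [← Fin.insertNth_self_removeNth k (v - fun _ => v k), hx]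
      ext i
      rcases Fin.eq_self_or_eq_succAbove k i with rfl | ⟨l, rfl⟩ <;> simp
    exact sub_eq_zero.mp (congrFun hw i)
  · intro hv
    have hx : Fin.removeNth k (v - fun _ => v k) = 0 := by
      ext i
      simp [Fin.removeNth, hv (k.succAbove i)]
    rw [hx, zero_dotProduct]

theorem Matrix.posDef_submatrix_succAbove_of_posDef_submatrix (hK : K.IsSymm)
    (h1 : K *ᵥ (fun _ => 1) = 0) {k : Fin (n + 1)}
    (hk : (K.submatrix k.succAbove k.succAbove).PosDef) (j : Fin (n + 1)) :
    (K.submatrix j.succAbove j.succAbove).PosDef := by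
  refine .of_dotProduct_mulVec_pos (isHermitian_iff_isSymm.mpr (hK.submatrix _)) fun x hx => ?_
  rw [star_trivial, ← dotProduct_mulVec_insertNth_zero]
  refine lt_of_le_of_ne ?_ fun h0 => hx ?_
  · simpa [star_trivial]
      using (posSemidef_of_posDef_submatrix hK h1 hk).dotProduct_mulVec_nonneg
        (Fin.insertNth j 0 x)
  · -- the zero-extension of `x` is constant, and its `j`-th entry is `0`
    have hconst := (dotProduct_mulVec_self_eq_zero_iff_of_posDef_submatrix hK h1 hk _).mp h0.symm
    ext i
    simpa using (hconst (j.succAbove i)).trans (hconst j).symm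

end ZeroRowSums

/-- For symmetric `K` with `K 1 = 0` such that some principal submatrix `K_{-k,-k}` is
positive definite: every `K_{-j,-j}` is positive definite, `K` is positive semi-definite,
and the quadratic form vanishes exactly on constant vectors. -/
theorem submatrix_posDef_consequences (n : ℕ)
    (K : Matrix (Fin (n + 1)) (Fin (n + 1)) ℝ) (hK : K.IsSymm)
    (h1 : K.mulVec (fun _ => 1) = 0)
    (hk : ∃ k : Fin (n + 1), (K.submatrix k.succAbove k.succAbove).PosDef) :
    (∀ j : Fin (n + 1), (K.submatrix j.succAbove j.succAbove).PosDef)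
    ∧ K.PosSemidef
    ∧ ∀ a : Fin (n + 1) → ℝ, (a ⬝ᵥ K.mulVec a = 0 ↔ ∃ c : ℝ, ∀ i, a i = c) := by
  obtain ⟨k, hk⟩ := hk
  refine ⟨posDef_submatrix_succAbove_of_posDef_submatrix hK h1 hk,
    posSemidef_of_posDef_submatrix hK h1 hk, fun a => ?_⟩
  rw [dotProduct_mulVec_self_eq_zero_iff_of_posDef_submatrix hK h1 hk]
  exact ⟨fun h => ⟨a k, h⟩, fun ⟨c, hc⟩ i => (hc i).trans (hc k).symm⟩
end

section
/- Let m ≥ 2, let K ∈ ℝ^{m×m} be symmetric and η ∈ ℝ^m, and suppose either (I) K is positive definite, or (II) K 1_m = 0_m, K_{−k,−k} is positive definite for some k, and 1_m^⊤ η + m ≥ 0. Then for every j ∈ {1,…,m} and every t ∈ ℝ, ∫_{Δ_{−m}°} x_j^t · exp(−(1/2) L(x)^⊤ K L(x) + η^⊤ L(x)) dx < ∞, where x_m := 1 − Σ_{i=1}^{m−1} x_i and L(x) = (log x_1, …, log x_{m−1}, log x_m). In particular, if X has density proportional to this kernel on the simplex, then log X_j has a finite moment generating function on all of ℝ, and is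 sub-exponential. -/
open MeasureTheory Matrix Finset

/-- The open simplex `Δ_{-m}°` in `ℝ^n` (where `m = n+1`). -/
def simplexInt (n : ℕ) : Set (Fin n → ℝ) :=
  {x | (∀ i, 0 < x i) ∧ ∑ i, x i < 1}

/-- Profile the last coordinate: send `x ∈ ℝ^n` to `(x, 1 - ∑ x) ∈ ℝ^{n+1}`. -/
noncomputable def fullVec {n : ℕ} (x : Fin n → ℝ) : Fin (n + 1) → ℝ :=
  Fin.snoc x (1 - ∑ i, x i)

/-- Componentwise logarithm. -/
noncomputable def logVec {n : ℕ} (x : Fin n → ℝ) : Fin n → ℝ :=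
  fun i => Real.log (x i)

/-! On the open simplex the vector `u = log x` has all coordinates `≤ 0` and, since some `x_i ≥ 1/m`,
at least one coordinate `≥ -log m`. The integrand is `exp (b ⬝ u - ½ uᵀ K u)` with `b = η + t e_j`,
and this exponent is bounded above on such `u`. Under (I) this is coercivity of `K`. Under (II),
`K` kills constants, so writing `u = w + u_k 1` with `w_k = 0` the quadratic form is that of the
positive definite `K_{-k,-k}` at `w`, while `|u_k| ≤ log m + ‖w‖` controls the linear part.
A bounded measurable function is integrable on the bounded simplex. -/

open Real Set Metric

section QuadraticForm

variable {ι : Type*} [Fintype ι]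

theorem Matrix.PosDef.exists_pos_mul_norm_sq_le {M : Matrix ι ι ℝ} (hM : M.PosDef) :
    ∃ c > 0, ∀ v : ι → ℝ, c * ‖v‖ ^ 2 ≤ v ⬝ᵥ M *ᵥ v := by
  cases isEmpty_or_nonempty ι
  · exact ⟨1, one_pos, fun v => by simp [Subsingleton.elim v 0]⟩
  have hQ : Continuous fun v : ι → ℝ => v ⬝ᵥ M *ᵥ v :=
    continuous_id.dotProduct (continuous_const.matrix_mulVec continuous_id)
  obtain ⟨v₀, hv₀, hmin⟩ := (isCompact_sphere (0 : ι → ℝ) 1).exists_isMinOn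
    (NormedSpace.sphere_nonempty.2 zero_le_one) hQ.continuousOn
  have hv₀0 : v₀ ≠ 0 := ne_zero_of_mem_unit_sphere ⟨v₀, hv₀⟩
  refine ⟨v₀ ⬝ᵥ M *ᵥ v₀, by simpa using hM.dotProduct_mulVec_pos hv₀0, fun v => ?_⟩
  rcases eq_or_ne v 0 with rfl | hv
  · simp
  have hv' : 0 < ‖v‖ := norm_pos_iff.2 hv
  have hmin_v : v₀ ⬝ᵥ M *ᵥ v₀ ≤ (‖v‖⁻¹ • v) ⬝ᵥ M *ᵥ (‖v‖⁻¹ • v) :=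
    hmin (show ‖v‖⁻¹ • v ∈ sphere 0 1 by simp [norm_smul, hv'.ne'])
  rw [mulVec_smul, dotProduct_smul, smul_dotProduct, smul_eq_mul, smul_eq_mul] at hmin_v
  calc v₀ ⬝ᵥ M *ᵥ v₀ * ‖v‖ ^ 2 ≤ ‖v‖⁻¹ * (‖v‖⁻¹ * (v ⬝ᵥ M *ᵥ v)) * ‖v‖ ^ 2 := by gcongr
    _ = v ⬝ᵥ M *ᵥ v := by field_simp

theorem dotProduct_le_sum_abs_mul_norm (b u : ι → ℝ) : b ⬝ᵥ u ≤ (∑ i, |b i|) * ‖u‖ := by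
  rw [dotProduct, Finset.sum_mul]
  refine Finset.sum_le_sum fun i _ => ?_
  calc b i * u i ≤ |b i| * |u i| := by rw [← abs_mul]; exact le_abs_self _
    _ ≤ |b i| * ‖u‖ := by gcongr; exact norm_le_pi_norm u i

theorem dotProduct_mulVec_add_smul_one {K : Matrix ι ι ℝ} (hK : K.IsSymm) (hK1 : K *ᵥ 1 = 0)
    (v : ι → ℝ) (a : ℝ) : (v + a • 1) ⬝ᵥ K *ᵥ (v + a • 1) = v ⬝ᵥ K *ᵥ v := by
  have h1K : 1 ᵥ* K = 0 := by rw [← mulVec_transpose, hK.eq, hK1]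
  rw [mulVec_add, mulVec_smul, hK1, smul_zero, add_zero, add_dotProduct, smul_dotProduct,
    dotProduct_mulVec 1, h1K, zero_dotProduct, smul_zero, add_zero]

noncomputable def quadExponent (K : Matrix ι ι ℝ) (b u : ι → ℝ) : ℝ :=
  b ⬝ᵥ u - 1 / 2 * (u ⬝ᵥ K *ᵥ u)

theorem continuous_quadExponent (K : Matrix ι ι ℝ) (b : ι → ℝ) :
    Continuous (quadExponent K b) := by
  unfold quadExponent
  fun_prop

theorem quadExponent_le {K : Matrix ι ι ℝ} {b u : ι → ℝ} {c A B s : ℝ} (hc : 0 < c)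
    (hK : c * s ^ 2 ≤ u ⬝ᵥ K *ᵥ u) (hb : b ⬝ᵥ u ≤ A + B * s) :
    quadExponent K b u ≤ A + B ^ 2 / (2 * c) := by
  have hB : B ^ 2 / (2 * c) * (2 * c) = B ^ 2 := div_mul_cancel₀ _ (by positivity)
  unfold quadExponent
  nlinarith [sq_nonneg (c * s - B)]

theorem Matrix.PosDef.bddAbove_range_quadExponent {K : Matrix ι ι ℝ} (hK : K.PosDef)
    (b : ι → ℝ) : BddAbove (range (quadExponent K b)) := by
  obtain ⟨c, hc, hcK⟩ := hK.exists_pos_mul_norm_sq_le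
  refine ⟨0 + (∑ i, |b i|) ^ 2 / (2 * c), forall_mem_range.2 fun u => ?_⟩
  refine quadExponent_le hc (hcK u) ?_
  simpa using dotProduct_le_sum_abs_mul_norm b u

end QuadraticForm

section ConstantKernel

variable {n : ℕ}

theorem dotProduct_mulVec_eq_submatrix_succAbove (K : Matrix (Fin (n + 1)) (Fin (n + 1)) ℝ)
    {w : Fin (n + 1) → ℝ} {k : Fin (n + 1)} (hwk : w k = 0) :
    w ⬝ᵥ K *ᵥ w =
      (w ∘ k.succAbove) ⬝ᵥ K.submatrix k.succAbove k.succAbove *ᵥ (w ∘ k.succAbove) := by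
  simp only [dotProduct, mulVec, submatrix_apply, Function.comp_apply]
  rw [Fin.sum_univ_succAbove _ k, hwk, zero_mul, zero_add]
  refine Finset.sum_congr rfl fun p _ => ?_
  rw [Fin.sum_univ_succAbove _ k, hwk, mul_zero, zero_add]

theorem norm_le_norm_comp_succAbove {w : Fin (n + 1) → ℝ} {k : Fin (n + 1)} (hwk : w k = 0) :
    ‖w‖ ≤ ‖w ∘ k.succAbove‖ := by
  refine (pi_norm_le_iff_of_nonneg (norm_nonneg _)).2 fun i => ?_
  rcases eq_or_ne i k with rfl | hik
  · simp [hwk]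
  · obtain ⟨p, rfl⟩ := Fin.exists_succAbove_eq hik
    exact norm_le_pi_norm (w ∘ k.succAbove) p

theorem bddAbove_quadExponent_image_of_mulVec_one_eq_zero
    {K : Matrix (Fin (n + 1)) (Fin (n + 1)) ℝ} (hK : K.IsSymm) (hK1 : K *ᵥ 1 = 0)
    {k : Fin (n + 1)} (hk : (K.submatrix k.succAbove k.succAbove).PosDef) (b : Fin (n + 1) → ℝ)
    (L : ℝ) : BddAbove (quadExponent K b '' {u | (∀ i, u i ≤ 0) ∧ ∃ i, -L ≤ u i}) := by
  obtain ⟨c, hc, hcK⟩ := hk.exists_pos_mul_norm_sq_le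
  refine ⟨|∑ i, b i| * L + (∑ i, |b i| + |∑ i, b i|) ^ 2 / (2 * c), ?_⟩
  rintro _ ⟨u, ⟨hu_nonpos, i, hi⟩, rfl⟩
  set w := u - u k • 1
  have hu : u = w + u k • 1 := by simp [w]
  have hwk : w k = 0 := by simp [w]
  set s := ‖w ∘ k.succAbove‖
  have hws : ‖w‖ ≤ s := norm_le_norm_comp_succAbove hwk
  have hquad : c * s ^ 2 ≤ u ⬝ᵥ K *ᵥ u := by
    rw [hu, dotProduct_mulVec_add_smul_one hK hK1, dotProduct_mulVec_eq_submatrix_succAbove K hwk]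
    exact hcK _
  have huk : |u k| ≤ L + s := by
    have hwi : |w i| ≤ ‖w‖ := norm_le_pi_norm w i
    have : u k = u i - w i := by simp [w]
    rw [abs_of_nonpos (hu_nonpos k)]
    linarith [abs_le.1 hwi]
  have hlin : b ⬝ᵥ u = b ⬝ᵥ w + (∑ i, b i) * u k := by
    conv_lhs => rw [hu]
    rw [dotProduct_add, dotProduct_smul, dotProduct_one, smul_eq_mul, mul_comm]
  have hw_part : b ⬝ᵥ w ≤ (∑ i, |b i|) * s :=
    (dotProduct_le_sum_abs_mul_norm b w).trans (by gcongr)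
  have hk_part : (∑ i, b i) * u k ≤ |∑ i, b i| * (L + s) :=
    (le_abs_self _).trans (by rw [abs_mul]; gcongr)
  refine quadExponent_le hc hquad ?_
  linarith

end ConstantKernel

section Simplex

variable {n : ℕ} {x : Fin n → ℝ}

theorem isOpen_simplexInt (n : ℕ) : IsOpen (simplexInt n) := by
  simp only [simplexInt, ofPred_and, ofPred_forall]
  exact (isOpen_iInter_of_finite fun i => isOpen_lt continuous_const (continuous_apply i)).inter
    (isOpen_lt (continuous_finsetSum _ fun i _ => continuous_apply i) continuous_const)

theorem simplexInt_subset_Icc : simplexInt n ⊆ Icc 0 1 := fun _ ⟨hpos, hsum⟩ =>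
  ⟨fun i => (hpos i).le,
    fun i => (single_le_sum (fun i _ => (hpos i).le) (mem_univ i)).trans hsum.le⟩

theorem volume_simplexInt_lt_top (n : ℕ) : volume (simplexInt n) < ⊤ :=
  (isBounded_Icc 0 1 |>.subset simplexInt_subset_Icc).measure_lt_top

theorem continuous_fullVec : Continuous (fullVec (n := n)) := by
  refine continuous_pi fun i => ?_
  induction i using Fin.lastCases with
  | last =>
    simp only [fullVec, Fin.snoc_last]
    exact continuous_const.sub (continuous_finsetSum _ fun i _ => continuous_apply i)
  | cast p =>
    simp only [fullVec, Fin.snoc_castSucc]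
    exact continuous_apply p

theorem measurable_logVec_fullVec : Measurable fun x : Fin n → ℝ => logVec (fullVec x) :=
  measurable_pi_lambda _ fun i =>
    measurable_log.comp ((continuous_apply i).comp continuous_fullVec).measurable

theorem sum_fullVec (x : Fin n → ℝ) : ∑ i, fullVec x i = 1 := by
  simp [Fin.sum_univ_castSucc, fullVec]

theorem fullVec_pos (hx : x ∈ simplexInt n) (i : Fin (n + 1)) : 0 < fullVec x i := by
  induction i using Fin.lastCases with
  | last => simpa [fullVec] using hx.2
  | cast p => simpa [fullVec] using hx.1 p

theorem fullVec_le_one (hx : x ∈ simplexInt n) (i : Fin (n + 1)) : fullVec x i ≤ 1 :=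
  sum_fullVec x ▸ single_le_sum (fun i _ => (fullVec_pos hx i).le) (mem_univ i)

theorem exists_inv_le_fullVec (x : Fin n → ℝ) : ∃ i, ((n : ℝ) + 1)⁻¹ ≤ fullVec x i := by
  obtain ⟨i, -, hi⟩ := exists_le_of_sum_le univ_nonempty (f := fun _ => ((n : ℝ) + 1)⁻¹)
    (g := fullVec x) (by simp [sum_fullVec, mul_inv_cancel₀ (n.cast_add_one_ne_zero (R := ℝ))])
  exact ⟨i, hi⟩

theorem logVec_fullVec_mem (hx : x ∈ simplexInt n) :
    logVec (fullVec x) ∈ {u | (∀ i, u i ≤ 0) ∧ ∃ i, -log (n + 1) ≤ u i} := by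
  obtain ⟨i, hi⟩ := exists_inv_le_fullVec x
  refine ⟨fun i => log_nonpos (fullVec_pos hx i).le (fullVec_le_one hx i), i, ?_⟩
  simpa [logVec, log_inv] using log_le_log (by positivity) hi

end Simplex

theorem loglog_all_moments_finite_general (n : ℕ)
    (K : Matrix (Fin (n + 1)) (Fin (n + 1)) ℝ) (hK : K.IsSymm) (η : Fin (n + 1) → ℝ)
    (h : K.PosDef
      ∨ (K.mulVec (fun _ => 1) = 0
          ∧ (∃ k : Fin (n + 1), (K.submatrix k.succAbove k.succAbove).PosDef)
          ∧ 0 ≤ (∑ i, η i) + ((n : ℝ) + 1)))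
    (j : Fin (n + 1)) (t : ℝ) :
    IntegrableOn (fun x : Fin n → ℝ =>
      fullVec x j ^ t *
        Real.exp (-(1 / 2) * (logVec (fullVec x) ⬝ᵥ K.mulVec (logVec (fullVec x)))
          + η ⬝ᵥ logVec (fullVec x))) (simplexInt n) := by
  set b := η + t • Pi.single j 1
  obtain ⟨M, hM⟩ : BddAbove
      (quadExponent K b '' {u | (∀ i, u i ≤ 0) ∧ ∃ i, -log (n + 1) ≤ u i}) := by
    rcases h with hK' | ⟨hK1, ⟨k, hk⟩, -⟩
    · exact (hK'.bddAbove_range_quadExponent b).mono (image_subset_range _ _)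
    · exact bddAbove_quadExponent_image_of_mulVec_one_eq_zero hK hK1 hk b _
  have hmeas := (isOpen_simplexInt n).measurableSet
  have hF :
      IntegrableOn (fun x => exp (quadExponent K b (logVec (fullVec x)))) (simplexInt n) := by
    refine Measure.integrableOn_of_bounded (M := exp M) (volume_simplexInt_lt_top n).ne ?_
      (ae_restrict_of_forall_mem hmeas fun x hx => ?_)
    · exact ((continuous_quadExponent K b).measurable.comp
        measurable_logVec_fullVec).exp.aestronglyMeasurable
    · rw [norm_of_nonneg (exp_pos _).le, exp_le_exp]
      exact hM (mem_image_of_mem _ (logVec_fullVec_mem hx))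
  refine hF.congr_fun (fun x hx => ?_) hmeas
  rw [rpow_def_of_pos (fullVec_pos hx j), ← exp_add]
  simp only [quadExponent, b, add_dotProduct, smul_dotProduct, single_dotProduct, logVec, one_mul,
    smul_eq_mul, exp_eq_exp]
  ring

/-- Under condition (I) or (II) of Theorem 4.3, all moments `E[X_j^t]`, `t ∈ ℝ`, of the
log–log model are finite: `x_j^t` times the kernel is integrable over the simplex. -/
theorem loglog_all_moments_finite (n : ℕ) (hn : 1 ≤ n)
    (K : Matrix (Fin (n + 1)) (Fin (n + 1)) ℝ) (hK : K.IsSymm) (η : Fin (n + 1) → ℝ)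
    (h : K.PosDef
      ∨ (K.mulVec (fun _ => 1) = 0
          ∧ (∃ k : Fin (n + 1), (K.submatrix k.succAbove k.succAbove).PosDef)
          ∧ 0 ≤ (∑ i, η i) + ((n : ℝ) + 1)))
    (j : Fin (n + 1)) (t : ℝ) :
    IntegrableOn (fun x : Fin n → ℝ =>
      fullVec x j ^ t *
        Real.exp (-(1 / 2) * (logVec (fullVec x) ⬝ᵥ K.mulVec (logVec (fullVec x)))
          + η ⬝ᵥ logVec (fullVec x))) (simplexInt n) :=
  loglog_all_moments_finite_general n K hK η h j t
end

section
/- Let m ≥ 2, K ∈ ℝ^{m×m}, η ∈ ℝ^m, a > 0, b > 0, fix j ∈ {1,…,m−1}, α > max{0, 1−a, 1−b}, and fix x_{−j,−m} ∈ ℝ^{m−2} with all coordinates positive and coordinate sum strictly less than 1. With x_m := 1 − x_j − Σ_{i≠j,m} x_i and the profiled score s_j(x) = −(κ_{·,j}^⊤ x^a) x_j^{a−1} + (κ_{·,m}^⊤ x^a) x_m^{a−1} + η_j x_j^{b−1} − η_m x_m^{b−1}, the function x_j ↦ min{x_j, x_m}^α · s_j(x) tends to 0 both as x_j → 0⁺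 and as x_j → (1 − Σ_{i≠j,m} x_i)⁻ (i.e., as x_m → 0⁺). -/
/-!
Near either boundary point exactly one of `x_j`, `x_m` tends to `0`, while the other one and
the column sums `κ_{·,c}^⊤ x^a` (continuous since `a > 0`) have finite limits. After weighting
by `min{x_j, x_m}^α`, the powers of the vanishing coordinate become `x^{α + a - 1}` and
`x^{α + b - 1}`, which tend to `0` because `α > max{1 - a, 1 - b}`; the powers of the other
coordinate stay bounded and are killed by `min{x_j, x_m}^α → 0`, since `α > 0`.
-/

open Filter Topology

/-- The profiled score `s_j(x)` of the `a`-`b` model on the simplex (substituting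
`x_m = 1 - ∑_{i<m} x_i`), evaluated at a full vector `X ∈ ℝ^{n+1}`. -/
noncomputable def scoreFn {n : ℕ} (K : Matrix (Fin (n + 1)) (Fin (n + 1)) ℝ)
    (η : Fin (n + 1) → ℝ) (a b : ℝ) (j : Fin n) (X : Fin (n + 1) → ℝ) : ℝ :=
  -(∑ i, K i j.castSucc * X i ^ a) * X j.castSucc ^ (a - 1)
    + (∑ i, K i (Fin.last n) * X i ^ a) * X (Fin.last n) ^ (a - 1)
    + η j.castSucc * X j.castSucc ^ (b - 1)
    - η (Fin.last n) * X (Fin.last n) ^ (b - 1)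

section WeightedPowers

variable {ι : Type*} {l : Filter ι} {u v : ι → ℝ} {e α : ℝ}

lemma tendsto_min_rpow_mul_rpow_left {p : ℝ} (hu : Tendsto u l (𝓝 0))
    (hu₀ : ∀ᶠ t in l, 0 < u t) (hv : Tendsto v l (𝓝 e)) (he : 0 < e) (hp : 0 < α + p) :
    Tendsto (fun t => min (u t) (v t) ^ α * u t ^ p) l (𝓝 0) := by
  have hlt : ∀ᶠ t in l, u t < v t := by
    filter_upwards [hu.eventually (gt_mem_nhds (half_pos he)),
      hv.eventually (lt_mem_nhds (half_lt_self he))] with t hut hvt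
    exact hut.trans hvt
  refine (hu.rpow_const_nhds_zero hp).congr' ?_
  filter_upwards [hu₀, hlt] with t hpos hlt
  rw [min_eq_left hlt.le, Real.rpow_add hpos]

lemma tendsto_min_rpow_mul_rpow_right {q : ℝ} (hu : Tendsto u l (𝓝 0))
    (hv : Tendsto v l (𝓝 e)) (he : 0 < e) (hα : 0 < α) :
    Tendsto (fun t => min (u t) (v t) ^ α * v t ^ q) l (𝓝 0) := by
  have hmin : Tendsto (fun t => min (u t) (v t)) l (𝓝 0) := by
    simpa [min_eq_left he.le] using hu.min hv
  simpa using (hmin.rpow_const_nhds_zero hα).mul (hv.rpow_const (.inl he.ne'))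

lemma tendsto_min_rpow_mul_score_form {A B : ι → ℝ} {a b cA cB c d : ℝ}
    (hu : Tendsto u l (𝓝 0)) (hu₀ : ∀ᶠ t in l, 0 < u t) (hv : Tendsto v l (𝓝 e)) (he : 0 < e)
    (hA : Tendsto A l (𝓝 cA)) (hB : Tendsto B l (𝓝 cB))
    (hα : 0 < α) (hαa : 0 < α + (a - 1)) (hαb : 0 < α + (b - 1)) :
    Tendsto (fun t => min (u t) (v t) ^ α *
      (-A t * u t ^ (a - 1) + B t * v t ^ (a - 1) + c * u t ^ (b - 1) - d * v t ^ (b - 1)))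
      l (𝓝 0) := by
  have h := (((hA.neg.mul (tendsto_min_rpow_mul_rpow_left hu hu₀ hv he hαa)).add
    (hB.mul (tendsto_min_rpow_mul_rpow_right (q := a - 1) hu hv he hα))).add
    ((tendsto_const_nhds (x := c)).mul (tendsto_min_rpow_mul_rpow_left hu hu₀ hv he hαb))).sub
    ((tendsto_const_nhds (x := d)).mul
      (tendsto_min_rpow_mul_rpow_right (q := b - 1) hu hv he hα))
  simp only [mul_zero, add_zero, sub_zero] at h
  exact h.congr fun t => by ring

end WeightedPowers

lemma scoreFn_snoc_insertNth {n : ℕ} (K : Matrix (Fin (n + 2)) (Fin (n + 2)) ℝ)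
    (η : Fin (n + 2) → ℝ) (a b : ℝ) (j : Fin (n + 1)) (w : Fin n → ℝ) (x y : ℝ) :
    scoreFn K η a b j (Fin.snoc (j.insertNth x w) y) =
      -(∑ i, K i j.castSucc * (Fin.snoc (j.insertNth x w) y : Fin (n + 2) → ℝ) i ^ a)
          * x ^ (a - 1)
        + (∑ i, K i (Fin.last _) * (Fin.snoc (j.insertNth x w) y : Fin (n + 2) → ℝ) i ^ a)
          * y ^ (a - 1)
        + η j.castSucc * x ^ (b - 1) - η (Fin.last _) * y ^ (b - 1) := by
  simp only [scoreFn, Fin.snoc_castSucc, Fin.snoc_last, Fin.insertNth_apply_same]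

lemma continuous_sum_mul_rpow {ι X : Type*} [Fintype ι] [TopologicalSpace X] {f : X → ι → ℝ}
    (hf : Continuous f) (k : ι → ℝ) {a : ℝ} (ha : 0 ≤ a) :
    Continuous fun x => ∑ i, k i * f x i ^ a :=
  continuous_finsetSum _ fun i _ =>
    continuous_const.mul ((continuous_apply i).comp hf |>.rpow_const fun _ => .inr ha)

theorem weighted_score_boundary_limit_general (n : ℕ)
    (K : Matrix (Fin (n + 2)) (Fin (n + 2)) ℝ) (η : Fin (n + 2) → ℝ)
    (a b : ℝ) (ha : 0 < a)
    (j : Fin (n + 1)) (α : ℝ) (hα : max 0 (max (1 - a) (1 - b)) < α)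
    (w : Fin n → ℝ) (hws : ∑ i, w i < 1) :
    Tendsto
      (fun u : ℝ => min u (1 - u - ∑ i, w i) ^ α *
        scoreFn K η a b j (Fin.snoc (j.insertNth u w) (1 - u - ∑ i, w i)))
      (nhdsWithin 0 (Set.Ioi 0)) (nhds 0)
    ∧ Tendsto
      (fun u : ℝ => min u (1 - u - ∑ i, w i) ^ α *
        scoreFn K η a b j (Fin.snoc (j.insertNth u w) (1 - u - ∑ i, w i)))
      (nhdsWithin (1 - ∑ i, w i) (Set.Iio (1 - ∑ i, w i))) (nhds 0) := by
  set S := ∑ i, w i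
  rw [max_lt_iff, max_lt_iff] at hα
  obtain ⟨hα, h1a, h1b⟩ := hα
  have hαa : 0 < α + (a - 1) := by linarith
  have hαb : 0 < α + (b - 1) := by linarith
  have hS : 0 < 1 - S := by linarith
  have hX : Continuous fun u : ℝ =>
      (Fin.snoc (j.insertNth u w) (1 - u - S) : Fin (n + 2) → ℝ) := by
    fun_prop
  have hcol (c : Fin (n + 2)) := continuous_sum_mul_rpow hX (K · c) ha.le
  have hxm : Continuous fun u : ℝ => 1 - u - S := by fun_prop
  simp only [scoreFn_snoc_insertNth]
  constructor
  · refine tendsto_min_rpow_mul_score_form (tendsto_nhdsWithin_of_tendsto_nhds tendsto_id)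
      self_mem_nhdsWithin ?_ hS (hcol _).continuousWithinAt (hcol _).continuousWithinAt
      hα hαa hαb
    simpa using (hxm.tendsto 0).mono_left nhdsWithin_le_nhds
  -- At the right end `x_j` and `x_m` swap roles: the score has the same shape, with the
  -- column sums and the `η` coefficients negated.
  · have hxm₀ : Tendsto (fun u : ℝ => 1 - u - S) (𝓝[<] (1 - S)) (𝓝 0) := by
      convert (hxm.tendsto (1 - S)).mono_left nhdsWithin_le_nhds using 2
      ring
    have hpos : ∀ᶠ u in 𝓝[<] (1 - S), 0 < 1 - u - S :=
      eventually_nhdsWithin_of_forall fun u hu => by linarith [Set.mem_Iio.mp hu]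
    refine (tendsto_min_rpow_mul_score_form hxm₀ hpos
      (tendsto_nhdsWithin_of_tendsto_nhds tendsto_id) hS
      (hcol (Fin.last _)).continuousWithinAt.tendsto.neg
      (hcol j.castSucc).continuousWithinAt.tendsto.neg hα hαa hαb
      (c := -η (Fin.last _)) (d := -η j.castSucc)).congr fun u => ?_
    rw [id_eq, min_comm]
    ring

/-- With all other coordinates `w` fixed, the weighted profiled score
`min{x_j, x_m}^α s_j(x)` vanishes in the limit as `x_j → 0⁺` and as
`x_j → (1 - ∑ w)⁻` (i.e., `x_m → 0⁺`). Here `m = n + 2`, `j` ranges over the first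
`m - 1` coordinates, and `w ∈ ℝ^{m-2}` collects the coordinates other than `x_j, x_m`. -/
theorem weighted_score_boundary_limit (n : ℕ)
    (K : Matrix (Fin (n + 2)) (Fin (n + 2)) ℝ) (η : Fin (n + 2) → ℝ)
    (a b : ℝ) (ha : 0 < a) (hb : 0 < b)
    (j : Fin (n + 1)) (α : ℝ) (hα : max 0 (max (1 - a) (1 - b)) < α)
    (w : Fin n → ℝ) (hw : ∀ i, 0 < w i) (hws : ∑ i, w i < 1) :
    Tendsto
      (fun u : ℝ => min u (1 - u - ∑ i, w i) ^ α *
        scoreFn K η a b j (Fin.snoc (j.insertNth u w) (1 - u - ∑ i, w i)))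
      (nhdsWithin 0 (Set.Ioi 0)) (nhds 0)
    ∧ Tendsto
      (fun u : ℝ => min u (1 - u - ∑ i, w i) ^ α *
        scoreFn K η a b j (Fin.snoc (j.insertNth u w) (1 - u - ∑ i, w i)))
      (nhdsWithin (1 - ∑ i, w i) (Set.Iio (1 - ∑ i, w i))) (nhds 0) :=
  weighted_score_boundary_limit_general n K η a b ha j α hα w hws
end
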